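/- Let a < b be reals, k > 0, z any real number, n ≥ 1, h = (b−a)/(2n), θ = k·h, and nodes x_r = a + r·h for r = 0,…,2n. Let ψ : ℝ → ℝ be a polynomial of degree at most 2. Then ∫_a^b sin(k·x + z)·ψ(x) dx = h·[ α·(ψ(a)·cos(k·a + z) − ψ(b)·cos(k·b + z)) + β·S_even(z) + γ·S_odd(z) ], where S_even(z) = Σ_{r=0}^{n} ψ(x_{2r})·sin(k·x_{2r} + z) − (1/2)·(ψ(a)·sin(k·a + z) + ψ(b)·sin(k·b + z)) and S_odd(z) = Σ_{r=1}^{n} ψ(x_{2r−1})·sin(k·x_{2r−1} + z): the phase-shifted Filon formula is exact for quadratic polynomials for every phase z. -/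

import Mathlib

/-!
On a double panel `[m - h, m + h]` the integral of `sin (k s + z) ψ s` with `ψ` quadratic is
computed exactly by integrating by parts twice. Expanding `sin` and `cos` of `k (m ± h) + z`
with the addition formulas, the Filon weights `α, β, γ` of `θ = k h` are exactly what makes the
three-point panel rule agree with it, up to `sin² θ + cos² θ = 1`. Summing over the `n` panels
telescopes the `α`-terms and collects the `β`-terms into the even sum with halved end values.
-/

open Real Finset

noncomputable def filonAlpha (θ : ℝ) : ℝ :=
  1 / θ + sin θ * cos θ / θ ^ 2 - 2 * sin θ ^ 2 / θ ^ 3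

noncomputable def filonBeta (θ : ℝ) : ℝ :=
  2 * ((1 + cos θ ^ 2) / θ ^ 2 - 2 * sin θ * cos θ / θ ^ 3)

noncomputable def filonGamma (θ : ℝ) : ℝ := 4 * (sin θ / θ ^ 3 - cos θ / θ ^ 2)

noncomputable def sinMulQuadraticPrimitive (k z c0 c1 c2 t : ℝ) : ℝ :=
  (-(c2 * t ^ 2 + c1 * t + c0) * cos (k * t + z) * k ^ 2
    + (2 * c2 * t + c1) * sin (k * t + z) * k + 2 * c2 * cos (k * t + z)) / k ^ 3

section Primitive

variable {k : ℝ} (z c0 c1 c2 : ℝ)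

theorem hasDerivAt_sinMulQuadraticPrimitive (hk : k ≠ 0) (t : ℝ) :
    HasDerivAt (sinMulQuadraticPrimitive k z c0 c1 c2)
      (sin (k * t + z) * (c2 * t ^ 2 + c1 * t + c0)) t := by
  have hlin : HasDerivAt (fun t => k * t + z) k t := by
    simpa using ((hasDerivAt_id t).const_mul k).add_const z
  have hcos := (hasDerivAt_cos (k * t + z)).comp t hlin
  have hsin := (hasDerivAt_sin (k * t + z)).comp t hlin
  have hquad :=
    (((hasDerivAt_pow 2 t).const_mul c2).add ((hasDerivAt_id' t).const_mul c1)).add_const c0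
  have hdquad := ((hasDerivAt_id' t).const_mul (2 * c2)).add_const c1
  refine ((((hquad.neg.mul hcos).mul_const (k ^ 2)).add ((hdquad.mul hsin).mul_const k)).add
    (hcos.const_mul (2 * c2))).div_const (k ^ 3) |>.congr_deriv ?_
  simp only [Function.comp_apply, Pi.neg_apply, Pi.add_apply]
  field_simp
  ring

theorem integral_sin_mul_quadratic (hk : k ≠ 0) (u v : ℝ) :
    ∫ s in u..v, sin (k * s + z) * (c2 * s ^ 2 + c1 * s + c0) =
      sinMulQuadraticPrimitive k z c0 c1 c2 v - sinMulQuadraticPrimitive k z c0 c1 c2 u := by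
  have hcont : Continuous fun s => sin (k * s + z) * (c2 * s ^ 2 + c1 * s + c0) := by fun_prop
  exact intervalIntegral.integral_eq_sub_of_hasDerivAt
    (fun t _ => hasDerivAt_sinMulQuadraticPrimitive z c0 c1 c2 hk t) (hcont.intervalIntegrable _ _)

end Primitive

theorem integral_sin_mul_eq_filon_panel {k : ℝ} (z c0 c1 c2 : ℝ) {ψ : ℝ → ℝ}
    (hψ : ∀ s, ψ s = c2 * s ^ 2 + c1 * s + c0) (hk : k ≠ 0) (m h : ℝ) :
    ∫ s in (m - h)..(m + h), sin (k * s + z) * ψ s =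
      h * (filonAlpha (k * h)
            * (ψ (m - h) * cos (k * (m - h) + z) - ψ (m + h) * cos (k * (m + h) + z))
        + filonBeta (k * h)
            * ((ψ (m - h) * sin (k * (m - h) + z) + ψ (m + h) * sin (k * (m + h) + z)) / 2)
        + filonGamma (k * h) * (ψ m * sin (k * m + z))) := by
  rcases eq_or_ne h 0 with rfl | hh
  · simp
  simp only [hψ]
  rw [integral_sin_mul_quadratic z c0 c1 c2 hk, sinMulQuadraticPrimitive,
    sinMulQuadraticPrimitive, filonAlpha, filonBeta, filonGamma,
    show k * (m + h) + z = (k * m + z) + k * h by ring,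
    show k * (m - h) + z = (k * m + z) - k * h by ring, sin_add, cos_add, sin_sub, cos_sub]
  field_simp
  linear_combination (2 * sin (m * k + z) * (2 * sin (h * k) - h * k * cos (h * k))
    * (c0 + c1 * m + c2 * m ^ 2 + c2 * h ^ 2)) * sin_sq_add_cos_sq (h * k)

theorem sum_range_add_succ_div_two {K : Type*} [Field K] [CharZero K] (q : ℕ → K) (n : ℕ) :
    ∑ i ∈ range n, (q i + q (i + 1)) / 2 = ∑ i ∈ range (n + 1), q i - (q 0 + q n) / 2 := by
  induction n with
  | zero => simp
  | succ n ih =>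
    rw [sum_range_succ, ih, sum_range_succ _ (n + 1)]
    ring

theorem sum_range_filon_panels {K : Type*} [Field K] [CharZero K] (n : ℕ) (h α β γ : K)
    (g q w : ℕ → K) :
    ∑ i ∈ range n, h * (α * (g i - g (i + 1)) + β * ((q i + q (i + 1)) / 2) + γ * w i) =
      h * (α * (g 0 - g n) + β * (∑ i ∈ range (n + 1), q i - (q 0 + q n) / 2)
        + γ * ∑ i ∈ range n, w i) := by
  rw [← mul_sum, sum_add_distrib, sum_add_distrib, ← mul_sum, ← mul_sum, ← mul_sum,
    sum_range_sub', sum_range_add_succ_div_two]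

theorem integral_sin_mul_eq_filon_composite {k : ℝ} (z c0 c1 c2 : ℝ) {ψ : ℝ → ℝ}
    (hψ : ∀ s, ψ s = c2 * s ^ 2 + c1 * s + c0) (hk : k ≠ 0) (n : ℕ) {a h : ℝ}
    {x : ℕ → ℝ} (hx : ∀ r : ℕ, x r = a + r * h) :
    ∫ s in x 0..x (2 * n), sin (k * s + z) * ψ s =
      h * (filonAlpha (k * h)
            * (ψ (x 0) * cos (k * x 0 + z) - ψ (x (2 * n)) * cos (k * x (2 * n) + z))
        + filonBeta (k * h) * ((∑ r ∈ range (n + 1), ψ (x (2 * r)) * sin (k * x (2 * r) + z))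
            - (ψ (x 0) * sin (k * x 0 + z) + ψ (x (2 * n)) * sin (k * x (2 * n) + z)) / 2)
        + filonGamma (k * h)
            * ∑ r ∈ range n, ψ (x (2 * r + 1)) * sin (k * x (2 * r + 1) + z)) := by
  have hcont : Continuous fun s => sin (k * s + z) * ψ s := by
    simp only [hψ]
    fun_prop
  have hpanel (i : ℕ) : ∫ s in x (2 * i)..x (2 * (i + 1)), sin (k * s + z) * ψ s =
      h * (filonAlpha (k * h) * (ψ (x (2 * i)) * cos (k * x (2 * i) + z)
            - ψ (x (2 * (i + 1))) * cos (k * x (2 * (i + 1)) + z))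
        + filonBeta (k * h) * ((ψ (x (2 * i)) * sin (k * x (2 * i) + z)
            + ψ (x (2 * (i + 1))) * sin (k * x (2 * (i + 1)) + z)) / 2)
        + filonGamma (k * h) * (ψ (x (2 * i + 1)) * sin (k * x (2 * i + 1) + z))) := by
    rw [show x (2 * i) = x (2 * i + 1) - h by simp only [hx]; push_cast; ring,
      show x (2 * (i + 1)) = x (2 * i + 1) + h by simp only [hx]; push_cast; ring]
    exact integral_sin_mul_eq_filon_panel z c0 c1 c2 hψ hk _ h
  rw [← intervalIntegral.sum_integral_adjacent_intervals (a := fun i => x (2 * i))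
      fun i _ => hcont.intervalIntegrable _ _, sum_congr rfl fun i _ => hpanel i]
  exact sum_range_filon_panels n h _ _ _ (fun j => ψ (x (2 * j)) * cos (k * x (2 * j) + z))
    (fun j => ψ (x (2 * j)) * sin (k * x (2 * j) + z))
    (fun j => ψ (x (2 * j + 1)) * sin (k * x (2 * j + 1) + z))

theorem filon_phase_shifted_exact_on_quadratics_general
    (a b k z : ℝ) (hk : 0 < k) (n : ℕ) (hn : 1 ≤ n)
    (h : ℝ) (hh : h = (b - a) / (2 * n)) (θ : ℝ) (hθ : θ = k * h)
    (x : ℕ → ℝ) (hx : ∀ r : ℕ, x r = a + r * h)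
    (α β γ : ℝ)
    (hα : α = 1 / θ + Real.sin θ * Real.cos θ / θ ^ 2 - 2 * Real.sin θ ^ 2 / θ ^ 3)
    (hβ : β = 2 * ((1 + Real.cos θ ^ 2) / θ ^ 2 - 2 * Real.sin θ * Real.cos θ / θ ^ 3))
    (hγ : γ = 4 * (Real.sin θ / θ ^ 3 - Real.cos θ / θ ^ 2))
    (ψ : ℝ → ℝ) (hψ : ∃ c0 c1 c2 : ℝ, ∀ s : ℝ, ψ s = c2 * s ^ 2 + c1 * s + c0) :
    (∫ s in a..b, Real.sin (k * s + z) * ψ s) =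
      h * (α * (ψ a * Real.cos (k * a + z) - ψ b * Real.cos (k * b + z))
        + β * ((∑ r ∈ Finset.range (n + 1), ψ (x (2 * r)) * Real.sin (k * x (2 * r) + z))
            - (ψ a * Real.sin (k * a + z) + ψ b * Real.sin (k * b + z)) / 2)
        + γ * ∑ r ∈ Finset.range n, ψ (x (2 * r + 1)) * Real.sin (k * x (2 * r + 1) + z)) := by
  obtain ⟨c0, c1, c2, hψ⟩ := hψ
  subst hθ hα hβ hγ
  have hx0 : x 0 = a := by simp [hx]
  have hx2n : x (2 * n) = b := by
    have : (n : ℝ) ≠ 0 := Nat.cast_ne_zero.mpr (by omega)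
    rw [hx, hh]
    push_cast
    field_simp
    ring
  rw [← hx0, ← hx2n]
  exact integral_sin_mul_eq_filon_composite z c0 c1 c2 hψ hk.ne' n hx

theorem filon_phase_shifted_exact_on_quadratics
    (a b k z : ℝ) (hab : a < b) (hk : 0 < k) (n : ℕ) (hn : 1 ≤ n)
    (h : ℝ) (hh : h = (b - a) / (2 * n)) (θ : ℝ) (hθ : θ = k * h)
    (x : ℕ → ℝ) (hx : ∀ r : ℕ, x r = a + r * h)
    (α β γ : ℝ)
    (hα : α = 1 / θ + Real.sin θ * Real.cos θ / θ ^ 2 - 2 * Real.sin θ ^ 2 / θ ^ 3)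
    (hβ : β = 2 * ((1 + Real.cos θ ^ 2) / θ ^ 2 - 2 * Real.sin θ * Real.cos θ / θ ^ 3))
    (hγ : γ = 4 * (Real.sin θ / θ ^ 3 - Real.cos θ / θ ^ 2))
    (ψ : ℝ → ℝ) (hψ : ∃ c0 c1 c2 : ℝ, ∀ s : ℝ, ψ s = c2 * s ^ 2 + c1 * s + c0) :
    (∫ s in a..b, Real.sin (k * s + z) * ψ s) =
      h * (α * (ψ a * Real.cos (k * a + z) - ψ b * Real.cos (k * b + z))
        + β * ((∑ r ∈ Finset.range (n + 1), ψ (x (2 * r)) * Real.sin (k * x (2 * r) + z))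
            - (ψ a * Real.sin (k * a + z) + ψ b * Real.sin (k * b + z)) / 2)
        + γ * ∑ r ∈ Finset.range n, ψ (x (2 * r + 1)) * Real.sin (k * x (2 * r + 1) + z)) :=
  filon_phase_shifted_exact_on_quadratics_general a b k z hk n hn h hh θ hθ x hx α β γ hα hβ hγ ψ hψ
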